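/- arXiv:math/0701313 — 3 statements merged into one kernel-verified Lean document; each statement's English description precedes it below -/
import Mathlib

section
/- Let n ≥ 1 and V = Fin n → ℝ, and let the group W(B_n) of signed permutation maps act on subspaces of V by taking images. Let Δ, Δ' ⊆ Fin n, let Λ, Λ' be set partitions of J = Fin n ∖ Δ and J' = Fin n ∖ Δ' respectively, and let Γ ⊆ J, Γ' ⊆ J'. Then X(Δ,Γ,Λ) and X(Δ',Γ',Λ') lie in the same W(B_n)-orbit if and only if |Δ| = |Δ'| and Λ, Λ' have the same multiset of block sizes. Moreover, if Λ has p blocks with block-size multiset λ and j = n − |Δ|, the orbit of X(Δ,Γ,Λ) has cardinality 2^{j−p} · (n choose j) · j!/b_λ. -/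
/-- The subspace `X(Δ,Γ,Λ)`: vectors vanishing on `Δ` and with
`η_i v_i = η_j v_j` whenever `i,j` lie in the same block of the partition `Λ`
of the complement of `Δ`, where `η_i = 1` for `i ∈ Γ` and `η_i = -1` otherwise. -/
def signedPartitionSubspace {n : ℕ} (Δ Γ : Finset (Fin n))
    (Λ : Setoid {i : Fin n // i ∉ Δ}) : Submodule ℝ (Fin n → ℝ) where
  carrier := {v | (∀ i ∈ Δ, v i = 0) ∧
    ∀ i j : {i : Fin n // i ∉ Δ}, Λ.r i j →
      (if (i : Fin n) ∈ Γ then (1 : ℝ) else -1) * v i =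
        (if (j : Fin n) ∈ Γ then (1 : ℝ) else -1) * v j}
  add_mem' := by
    rintro a b ⟨ha0, ha1⟩ ⟨hb0, hb1⟩
    refine ⟨fun i hi => by simp [Pi.add_apply, ha0 i hi, hb0 i hi], fun i j hij => ?_⟩
    simp only [Pi.add_apply]
    linear_combination ha1 i j hij + hb1 i j hij
  zero_mem' := ⟨fun i _ => rfl, fun i j _ => by simp⟩
  smul_mem' := by
    rintro c v ⟨h0, h1⟩
    refine ⟨fun i hi => by simp [h0 i hi], fun i j hij => ?_⟩
    simp only [Pi.smul_apply, smul_eq_mul]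
    linear_combination c * h1 i j hij

open Classical in
/-- The multiset of block sizes of a set partition (equivalence relation) on a
finite type. -/
noncomputable def blockSizes {α : Type*} [Fintype α] (Λ : Setoid α) : Multiset ℕ :=
  ((Finset.univ.image fun i : α => {j | Λ.r i j}).val).map fun s => s.ncard

/-- For a multiset of (positive) part sizes `λ` with `b_i` parts equal to `i`,
`b_λ = ∏_i b_i! (i!)^{b_i}`. -/
def bLambda (lam : Multiset ℕ) : ℕ :=
  lam.toFinset.prod fun i => (lam.count i).factorial * i.factorial ^ lam.count i

/-- The Weyl group of type `B_n`: the signed permutation maps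
`(g_{σ,ε} v) i = ε i * v (σ⁻¹ i)` with `ε i = ±1`. -/
def weylB (n : ℕ) : Set ((Fin n → ℝ) ≃ₗ[ℝ] (Fin n → ℝ)) :=
  {g | ∃ (σ : Equiv.Perm (Fin n)) (ε : Fin n → ℝ), (∀ i, ε i = 1 ∨ ε i = -1) ∧
    ∀ (v : Fin n → ℝ) (i : Fin n), g v i = ε i * v (σ⁻¹ i)}


set_option maxHeartbeats 1000000

namespace SPS
open Finset

section Quot
variable {α β : Type*} [Fintype α] [Fintype β]

open Classical

/-- The size of the block of `q`. -/
noncomputable def fibSize (Λ : Setoid α) (q : Quotient Λ) : ℕ :=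
  Nat.card {a : α // Quotient.mk Λ a = q}

noncomputable instance (Λ : Setoid α) : Fintype (Quotient Λ) :=
  Quotient.fintype Λ

/-- The class map, lifted to the quotient. -/
noncomputable def clsSet (Λ : Setoid α) (q : Quotient Λ) : Set α :=
  Quotient.liftOn q (fun i => {j | Λ.r i j}) (fun a b hab => by
    ext j; exact ⟨fun h => Λ.trans' (Λ.symm' hab) h, fun h => Λ.trans' hab h⟩)

lemma clsSet_mk (Λ : Setoid α) (a : α) : clsSet Λ (Quotient.mk Λ a) = {j | Λ.r a j} := rfl

lemma clsSet_injective (Λ : Setoid α) : Function.Injective (clsSet Λ) := by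
  intro q₁ q₂ h
  induction q₁ using Quotient.ind
  induction q₂ using Quotient.ind
  rename_i a b
  rw [clsSet_mk, clsSet_mk] at h
  refine Quotient.sound ?_
  have : b ∈ {j | Λ.r a j} := by rw [h]; exact Λ.refl' b
  exact this

lemma clsSet_ncard (Λ : Setoid α) (q : Quotient Λ) :
    (clsSet Λ q).ncard = fibSize Λ q := by
  induction q using Quotient.ind
  rename_i a
  rw [clsSet_mk, ← Nat.card_coe_set_eq]
  exact Nat.card_congr (Equiv.subtypeEquivRight fun j => by
    simp only [Set.mem_setOf_eq]
    exact ⟨fun h => Quotient.sound (Λ.symm' h), fun h => Λ.symm' (Quotient.exact h)⟩)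

lemma blockSizes_eq_map (Λ : Setoid α) :
    blockSizes Λ = (Finset.univ : Finset (Quotient Λ)).val.map (fibSize Λ) := by
  unfold blockSizes
  have h1 : (Finset.univ.image fun i : α => {j | Λ.r i j}) =
      Finset.univ.image (clsSet Λ) := by
    rw [show (fun i : α => {j | Λ.r i j}) = clsSet Λ ∘ (Quotient.mk Λ) from rfl,
      ← Finset.image_image, Finset.image_univ_of_surjective (Quotient.mk_surjective)]
  rw [h1, Finset.image_val_of_injOn ((clsSet_injective Λ).injOn), Multiset.map_map]
  exact Multiset.map_congr rfl fun q _ => clsSet_ncard Λ q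

lemma card_blockSizes (Λ : Setoid α) :
    Multiset.card (blockSizes Λ) = Fintype.card (Quotient Λ) := by
  rw [blockSizes_eq_map, Multiset.card_map]; rfl

lemma count_blockSizes (Λ : Setoid α) (k : ℕ) :
    Multiset.count k (blockSizes Λ) =
      Fintype.card {q : Quotient Λ // fibSize Λ q = k} := by
  rw [blockSizes_eq_map, Multiset.count_map, Fintype.card_subtype]
  have h : Multiset.card (Multiset.filter (fun a => k = fibSize Λ a) Finset.univ.val) =
      (Finset.univ.filter (fun a => k = fibSize Λ a)).card := rfl
  rw [h]
  congr 1
  apply Finset.filter_congr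
  intro q _
  simp [eq_comm]

/-- counting elements of a multiset image of `univ`. -/
lemma count_map_univ {γ : Type*} [Fintype γ] (f : γ → ℕ) (k : ℕ) :
    Multiset.count k ((Finset.univ : Finset γ).val.map f) =
      Fintype.card {x : γ // f x = k} := by
  rw [Multiset.count_map, Fintype.card_subtype]
  have h : Multiset.card (Multiset.filter (fun a => k = f a) Finset.univ.val) =
      (Finset.univ.filter (fun a => k = f a)).card := rfl
  rw [h]
  congr 1
  apply Finset.filter_congr
  intro q _
  simp [eq_comm]

/-- Extracting a fiber-preserving bijection from equality of multiset images. -/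
lemma equiv_of_map_univ_eq {γ γ' : Type*} [Fintype γ] [Fintype γ']
    {f : γ → ℕ} {f' : γ' → ℕ}
    (h : (Finset.univ : Finset γ).val.map f = (Finset.univ : Finset γ').val.map f') :
    ∃ e : γ ≃ γ', ∀ x, f' (e x) = f x := by
  have hc : ∀ k, Fintype.card {x : γ // f x = k} = Fintype.card {y : γ' // f' y = k} := by
    intro k
    rw [← count_map_univ f k, ← count_map_univ f' k, h]
  let E : ∀ k, {x : γ // f x = k} ≃ {y : γ' // f' y = k} :=
    fun k => Fintype.equivOfCardEq (hc k)
  refine ⟨(Equiv.sigmaFiberEquiv f).symm.trans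
    ((Equiv.sigmaCongrRight E).trans (Equiv.sigmaFiberEquiv f')), fun x => ?_⟩
  exact (E (f x) ⟨x, rfl⟩).2

/-- The induced equivalence of quotients. -/
noncomputable def quotCongr {Λα : Setoid α} {Λβ : Setoid β} (e : α ≃ β)
    (he : ∀ a b, Λβ.r (e a) (e b) ↔ Λα.r a b) : Quotient Λα ≃ Quotient Λβ :=
  Quotient.congr e fun a b => (he a b).symm

lemma quotCongr_mk {Λα : Setoid α} {Λβ : Setoid β} (e : α ≃ β)
    (he : ∀ a b, Λβ.r (e a) (e b) ↔ Λα.r a b) (a : α) :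
    quotCongr e he (Quotient.mk Λα a) = Quotient.mk Λβ (e a) := rfl

lemma fibSize_quotCongr {Λα : Setoid α} {Λβ : Setoid β} (e : α ≃ β)
    (he : ∀ a b, Λβ.r (e a) (e b) ↔ Λα.r a b) (q : Quotient Λα) :
    fibSize Λβ (quotCongr e he q) = fibSize Λα q := by
  induction q using Quotient.ind
  rename_i a
  rw [quotCongr_mk]
  unfold fibSize
  refine (Nat.card_congr (Equiv.subtypeEquiv e fun x => ?_)).symm
  constructor
  · intro hx
    exact Quotient.sound ((he x a).2 (Quotient.exact hx))
  · intro hx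
    exact Quotient.sound ((he x a).1 (Quotient.exact hx))

/-- `blockSizes` is invariant under relation-preserving bijections. -/
lemma blockSizes_congr {Λα : Setoid α} {Λβ : Setoid β} (e : α ≃ β)
    (he : ∀ a b, Λβ.r (e a) (e b) ↔ Λα.r a b) :
    blockSizes Λα = blockSizes Λβ := by
  rw [blockSizes_eq_map, blockSizes_eq_map]
  apply Multiset.ext.2
  intro k
  rw [count_map_univ, count_map_univ]
  refine Fintype.card_congr (Equiv.subtypeEquiv (quotCongr e he) fun q => ?_)
  rw [fibSize_quotCongr]

/-- Conversely, equal `blockSizes` yields a relation-preserving bijection. -/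
lemma exists_relEquiv_of_blockSizes_eq (Λα : Setoid α) (Λβ : Setoid β)
    (h : blockSizes Λα = blockSizes Λβ) :
    ∃ e : α ≃ β, ∀ a b, Λβ.r (e a) (e b) ↔ Λα.r a b := by
  rw [blockSizes_eq_map, blockSizes_eq_map] at h
  obtain ⟨qe, hqe⟩ := equiv_of_map_univ_eq h
  have hcard : ∀ q : Quotient Λα,
      Fintype.card {a : α // Quotient.mk Λα a = q} =
        Fintype.card {b : β // Quotient.mk Λβ b = qe q} := by
    intro q
    have := hqe q
    unfold fibSize at this
    rw [Nat.card_eq_fintype_card, Nat.card_eq_fintype_card] at this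
    exact this.symm
  let E : ∀ q : Quotient Λα,
      {a : α // Quotient.mk Λα a = q} ≃ {b : β // Quotient.mk Λβ b = qe q} :=
    fun q => Fintype.equivOfCardEq (hcard q)
  let e : α ≃ β := (Equiv.sigmaFiberEquiv (Quotient.mk Λα)).symm.trans
    ((Equiv.sigmaCongr qe E).trans (Equiv.sigmaFiberEquiv (Quotient.mk Λβ)))
  have hmk : ∀ a : α, Quotient.mk Λβ (e a) = qe (Quotient.mk Λα a) := by
    intro a
    exact (E (Quotient.mk Λα a) ⟨a, rfl⟩).2
  refine ⟨e, fun a b => ?_⟩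
  constructor
  · intro hr
    have h1 : qe (Quotient.mk Λα a) = qe (Quotient.mk Λα b) := by
      rw [← hmk, ← hmk]; exact Quotient.sound hr
    exact Quotient.exact (qe.injective h1)
  · intro hr
    have h1 : Quotient.mk Λβ (e a) = Quotient.mk Λβ (e b) := by
      rw [hmk, hmk]
      exact congrArg qe (Quotient.sound hr)
    exact Quotient.exact h1

end Quot

section PermCount
variable {γ : Type*} [Fintype γ]
open Classical Finset

/-- The fibered description of `γ` along `f`, with index the image of `f`. -/
noncomputable def fiberSigma (f : γ → ℕ) :
    (Σ k : {k : ℕ // k ∈ Finset.univ.image f}, {x : γ // f x = k.1}) ≃ γ where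
  toFun p := p.2.1
  invFun x := ⟨⟨f x, Finset.mem_image_of_mem f (Finset.mem_univ x)⟩, ⟨x, rfl⟩⟩
  left_inv := by
    rintro ⟨⟨k, hk⟩, ⟨x, hx⟩⟩
    have hx' : f x = k := hx
    subst hx'
    rfl
  right_inv x := rfl

/-- Gluing a family of fiber permutations into a permutation of `γ`. -/
noncomputable def gluePerm (f : γ → ℕ)
    (P : ∀ k : {k : ℕ // k ∈ Finset.univ.image f}, Equiv.Perm {x : γ // f x = k.1}) :
    Equiv.Perm γ :=
  ((fiberSigma f).symm.trans (Equiv.sigmaCongrRight P)).trans (fiberSigma f)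

lemma gluePerm_apply (f : γ → ℕ) (P) (x : γ) :
    gluePerm f P x =
      (P ⟨f x, Finset.mem_image_of_mem f (Finset.mem_univ x)⟩ ⟨x, rfl⟩).1 := rfl

lemma gluePerm_prop (f : γ → ℕ) (P) (x : γ) : f (gluePerm f P x) = f x :=
  (P ⟨f x, Finset.mem_image_of_mem f (Finset.mem_univ x)⟩ ⟨x, rfl⟩).2

/-- The number of permutations commuting with a function to `ℕ`. -/
lemma card_perm_preserving (f : γ → ℕ) :
    Nat.card {τ : Equiv.Perm γ // ∀ x, f (τ x) = f x} =
      ∏ k ∈ Finset.univ.image f, (Nat.card {x : γ // f x = k}).factorial := by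
  simp only [Nat.card_eq_fintype_card]
  have hbij : Function.Bijective
      (fun P : ∀ k : {k : ℕ // k ∈ Finset.univ.image f}, Equiv.Perm {x : γ // f x = k.1} =>
        (⟨gluePerm f P, gluePerm_prop f P⟩ :
          {τ : Equiv.Perm γ // ∀ x, f (τ x) = f x})) := by
    constructor
    · intro P Q h
      have h' : ∀ x : γ, gluePerm f P x = gluePerm f Q x := fun x =>
        congrFun (congrArg (fun t => (Subtype.val t : Equiv.Perm γ).toFun) h) x
      funext k
      apply Equiv.ext
      rintro ⟨x, hx⟩
      rcases k with ⟨k, hk⟩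
      have hx' : f x = k := hx
      subst hx'
      apply Subtype.ext
      have := h' x
      rw [gluePerm_apply, gluePerm_apply] at this
      exact this
    · rintro ⟨τ, hτ⟩
      refine ⟨fun k => ⟨fun x => ⟨τ x.1, by rw [hτ x.1]; exact x.2⟩,
        fun x => ⟨τ.symm x.1, by
          have := hτ (τ.symm x.1); rw [Equiv.apply_symm_apply] at this
          rw [← this]; exact x.2⟩,
        fun x => by apply Subtype.ext; simp,
        fun x => by apply Subtype.ext; simp⟩, ?_⟩
      apply Subtype.ext
      apply Equiv.ext
      intro x
      rw [gluePerm_apply]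
      rfl
  rw [← Fintype.card_of_bijective hbij, Fintype.card_pi]
  rw [← Finset.prod_attach (Finset.univ.image f)
    (fun k => (Fintype.card {x : γ // f x = k}).factorial)]
  apply Finset.prod_congr rfl
  intro k _
  exact Fintype.card_perm

end PermCount

section Stab
variable {α : Type*} [Fintype α]
open Classical

noncomputable instance setoidFintype : Fintype (Setoid α) :=
  Fintype.ofInjective (fun S : Setoid α => S.r)
    (fun S T h => Setoid.ext fun a b => iff_of_eq (congrFun (congrFun h a) b))

noncomputable def glueStab (Λ : Setoid α) (τ : Equiv.Perm (Quotient Λ))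
    (E : ∀ q : Quotient Λ,
      {a : α // Quotient.mk Λ a = q} ≃ {a : α // Quotient.mk Λ a = τ q}) :
    Equiv.Perm α :=
  ((Equiv.sigmaFiberEquiv (Quotient.mk Λ)).symm.trans
    (Equiv.sigmaCongr τ E)).trans (Equiv.sigmaFiberEquiv (Quotient.mk Λ))

lemma glueStab_apply (Λ : Setoid α) (τ : Equiv.Perm (Quotient Λ)) (E) (a : α) :
    glueStab Λ τ E a = (E (Quotient.mk Λ a) ⟨a, rfl⟩).1 := rfl

lemma glueStab_mk (Λ : Setoid α) (τ : Equiv.Perm (Quotient Λ)) (E) (a : α) :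
    Quotient.mk Λ (glueStab Λ τ E a) = τ (Quotient.mk Λ a) :=
  (E (Quotient.mk Λ a) ⟨a, rfl⟩).2

lemma glueStab_stab (Λ : Setoid α) (τ : Equiv.Perm (Quotient Λ)) (E) (a b : α) :
    Λ.r (glueStab Λ τ E a) (glueStab Λ τ E b) ↔ Λ.r a b := by
  constructor
  · intro h
    have h1 : τ (Quotient.mk Λ a) = τ (Quotient.mk Λ b) := by
      rw [← glueStab_mk Λ τ E a, ← glueStab_mk Λ τ E b]
      exact Quotient.sound h
    exact Quotient.exact (τ.injective h1)
  · intro h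
    refine Quotient.exact ?_
    rw [glueStab_mk, glueStab_mk]
    exact congrArg τ (Quotient.sound h)

/-- The cardinality of the set of partition-preserving permutations is `b_λ`. -/
lemma card_stabSet (Λ : Setoid α) :
    Nat.card {π : Equiv.Perm α // ∀ a b, Λ.r (π a) (π b) ↔ Λ.r a b} =
      bLambda (blockSizes Λ) := by
  rw [Nat.card_eq_fintype_card]
  set f := fibSize Λ with hf
  have hfc : ∀ q : Quotient Λ, f q = Fintype.card {a : α // Quotient.mk Λ a = q} :=
    fun q => Nat.card_eq_fintype_card
  -- the sigma decomposition
  have hbij : Function.Bijective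
      (fun x : Σ τ : {τ : Equiv.Perm (Quotient Λ) // ∀ q, f (τ q) = f q},
          ∀ q : Quotient Λ,
            ({a : α // Quotient.mk Λ a = q} ≃ {a : α // Quotient.mk Λ a = τ.1 q}) =>
        (⟨glueStab Λ x.1.1 x.2, glueStab_stab Λ x.1.1 x.2⟩ :
          {π : Equiv.Perm α // ∀ a b, Λ.r (π a) (π b) ↔ Λ.r a b})) := by
    constructor
    · rintro ⟨⟨τ, hτ⟩, E⟩ ⟨⟨τ', hτ'⟩, E'⟩ h
      have hval : ∀ a : α, glueStab Λ τ E a = glueStab Λ τ' E' a := fun a =>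
        congrFun (congrArg (fun t : {π : Equiv.Perm α // _} =>
          ((t : {π : Equiv.Perm α // _}).1 : Equiv.Perm α).toFun) h) a
      have hττ' : τ = τ' := by
        apply Equiv.ext
        intro q
        induction q using Quotient.ind
        rename_i a
        rw [← glueStab_mk Λ τ E a, ← glueStab_mk Λ τ' E' a, hval a]
      subst hττ'
      have hE : E = E' := by
        funext q
        apply Equiv.ext
        rintro ⟨a, ha⟩
        subst ha
        apply Subtype.ext
        have := hval a
        rw [glueStab_apply, glueStab_apply] at this
        exact this
      rw [hE]
    · rintro ⟨π, hπ⟩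
      have hτq : ∀ q : Quotient Λ, ∀ a b : α, Quotient.mk Λ a = q →
          Quotient.mk Λ b = q → Quotient.mk Λ (π a) = Quotient.mk Λ (π b) := by
        intro q a b ha hb
        exact Quotient.sound ((hπ a b).2 (Quotient.exact (ha.trans hb.symm)))
      let τ : Equiv.Perm (Quotient Λ) := quotCongr π hπ
      have hτ : ∀ q, f (τ q) = f q := fibSize_quotCongr π hπ
      have hmkτ : ∀ a : α, Quotient.mk Λ (π a) = τ (Quotient.mk Λ a) := fun a => rfl
      refine ⟨⟨⟨τ, hτ⟩, fun q => Equiv.subtypeEquiv π fun a => ?_⟩, ?_⟩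
      · constructor
        · rintro rfl
          exact (hmkτ a).symm ▸ rfl
        · intro h
          have : τ (Quotient.mk Λ a) = τ q := by rw [← hmkτ a, h]
          exact τ.injective this
      · apply Subtype.ext
        apply Equiv.ext
        intro a
        rw [glueStab_apply]
        rfl
  rw [← Fintype.card_of_bijective hbij, Fintype.card_sigma]
  have hcardeq : ∀ τ : {τ : Equiv.Perm (Quotient Λ) // ∀ q, f (τ q) = f q},
      Fintype.card (∀ q : Quotient Λ,
        ({a : α // Quotient.mk Λ a = q} ≃ {a : α // Quotient.mk Λ a = τ.1 q})) =
      ∏ q : Quotient Λ, (f q).factorial := by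
    rintro ⟨τ, hτ⟩
    rw [Fintype.card_pi]
    apply Finset.prod_congr rfl
    intro q _
    have hc : Fintype.card {a : α // Quotient.mk Λ a = q} =
        Fintype.card {a : α // Quotient.mk Λ a = τ q} := by
      rw [← hfc q, ← hfc (τ q), hτ q]
    rw [Fintype.card_equiv (Fintype.equivOfCardEq hc), ← hfc q]
  rw [Finset.sum_congr rfl fun τ _ => hcardeq τ, Finset.sum_const, Finset.card_univ,
    smul_eq_mul]
  -- now : card sub * ∏ q (f q)!
  rw [Fintype.card_eq_nat_card, card_perm_preserving f]
  have hts : (blockSizes Λ).toFinset = Finset.univ.image f := by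
    rw [blockSizes_eq_map]
    ext k
    simp only [Multiset.mem_toFinset, Multiset.mem_map, Finset.mem_image]
    constructor
    · rintro ⟨q, _, rfl⟩; exact ⟨q, Finset.mem_univ q, rfl⟩
    · rintro ⟨q, _, rfl⟩; exact ⟨q, (by simp), rfl⟩
  have hcount : ∀ k, (blockSizes Λ).count k =
      Nat.card {q : Quotient Λ // f q = k} := by
    intro k
    rw [blockSizes_eq_map]
    exact (count_map_univ f k).trans Fintype.card_eq_nat_card
  have hprod : ∏ q : Quotient Λ, (f q).factorial =
      ∏ k ∈ Finset.univ.image f,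
        (k.factorial) ^ Nat.card {q : Quotient Λ // f q = k} := by
    rw [Finset.prod_comp (fun k => k.factorial) f]
    apply Finset.prod_congr rfl
    intro k _
    congr 1
    exact ((Fintype.card_subtype _).symm.trans Fintype.card_eq_nat_card).symm |>.symm
  rw [hprod, ← Finset.prod_mul_distrib]
  unfold bLambda
  rw [hts]
  apply Finset.prod_congr rfl
  intro k _
  rw [hcount k]

/-- The action of permutations on setoids. -/
noncomputable instance setoidSMul : SMul (Equiv.Perm α) (Setoid α) :=
  ⟨fun π Λ => Setoid.comap ⇑π.symm Λ⟩

lemma smul_setoid_r (π : Equiv.Perm α) (Λ : Setoid α) (a b : α) :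
    (π • Λ).r a b ↔ Λ.r (π.symm a) (π.symm b) := Iff.rfl

noncomputable instance setoidMulAction : MulAction (Equiv.Perm α) (Setoid α) where
  one_smul Λ := Setoid.ext fun a b => Iff.rfl
  mul_smul π ρ Λ := Setoid.ext fun a b => Iff.rfl

lemma orbit_setoid (Λ : Setoid α) :
    MulAction.orbit (Equiv.Perm α) Λ = {S : Setoid α | blockSizes S = blockSizes Λ} := by
  ext S
  simp only [MulAction.mem_orbit_iff, Set.mem_setOf_eq]
  constructor
  · rintro ⟨π, rfl⟩
    refine (blockSizes_congr π fun a b => ?_).symm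
    rw [smul_setoid_r]
    simp
  · intro h
    obtain ⟨e, he⟩ := exists_relEquiv_of_blockSizes_eq Λ S h.symm
    refine ⟨e, Setoid.ext fun a b => ?_⟩
    rw [smul_setoid_r]
    have := he (e.symm a) (e.symm b)
    simp only [Equiv.apply_symm_apply] at this
    exact this.symm

theorem card_shape_mul_bLambda (Λ : Setoid α) :
    Nat.card {S : Setoid α // blockSizes S = blockSizes Λ} *
      bLambda (blockSizes Λ) = (Fintype.card α).factorial := by
  classical
  rw [Nat.card_eq_fintype_card]
  have h1 := MulAction.card_orbit_mul_card_stabilizer_eq_card_group (Equiv.Perm α) Λ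
  have h2 : Fintype.card (MulAction.orbit (Equiv.Perm α) Λ) =
      Fintype.card {S : Setoid α // blockSizes S = blockSizes Λ} := by
    apply Fintype.card_congr
    exact (Equiv.setCongr (orbit_setoid Λ)).trans
      (Equiv.subtypeEquivRight fun S => Iff.rfl)
  have h3 : Fintype.card (MulAction.stabilizer (Equiv.Perm α) Λ) =
      bLambda (blockSizes Λ) := by
    rw [Fintype.card_eq_nat_card, ← card_stabSet Λ]
    apply Nat.card_congr
    refine Equiv.subtypeEquivRight fun π => ?_
    rw [MulAction.mem_stabilizer_iff]
    constructor
    · intro hs a b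
      have h0 : (π • Λ).r (π a) (π b) ↔ Λ.r a b := by
        rw [smul_setoid_r]
        simp
      rw [hs] at h0
      exact h0
    · intro hs
      apply Setoid.ext
      intro a b
      rw [smul_setoid_r]
      have := hs (π.symm a) (π.symm b)
      simp only [Equiv.apply_symm_apply] at this
      exact this.symm
  rw [h2, h3, Fintype.card_perm] at h1
  exact h1

end Stab


section SPSMain
variable {n : ℕ}
open Classical
variable {n : ℕ}

/-- the sign function -/
noncomputable def sgn (Γ : Finset (Fin n)) (i : Fin n) : ℝ :=
  if i ∈ Γ then 1 else -1

lemma sgn_ne_zero (Γ : Finset (Fin n)) (i : Fin n) : sgn Γ i ≠ 0 := by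
  unfold sgn; split <;> norm_num

lemma sgn_cases (Γ : Finset (Fin n)) (i : Fin n) : sgn Γ i = 1 ∨ sgn Γ i = -1 := by
  unfold sgn; split <;> simp

lemma eq_of_sgn {s t x y : ℝ} (h : s * x = t * y) (hs : s * s = 1) (hst : s = t) :
    x = y := by
  subst hst
  have hx : x = s * (s * x) := by rw [← mul_assoc, hs, one_mul]
  rw [hx, h, ← mul_assoc, hs, one_mul]

lemma neg_of_sgn {s t x y : ℝ} (h : s * x = t * y) (hs : s * s = 1)
    (ht : t * t = 1) (hst : s = -t) : x = -y := by
  subst hst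
  have hx : x = (-t) * ((-t) * x) := by rw [← mul_assoc, hs, one_mul]
  rw [hx, h, show (-t) * (t * y) = -((t*t)*y) by ring, ht, one_mul]

lemma sgn_mul_self (Γ : Finset (Fin n)) (i : Fin n) : sgn Γ i * sgn Γ i = 1 := by
  unfold sgn; split <;> norm_num

lemma mem_sps {Δ Γ : Finset (Fin n)} {Λ : Setoid {i : Fin n // i ∉ Δ}}
    {v : Fin n → ℝ} :
    v ∈ signedPartitionSubspace Δ Γ Λ ↔ (∀ i ∈ Δ, v i = 0) ∧
      ∀ i j : {i : Fin n // i ∉ Δ}, Λ.r i j → sgn Γ i * v i = sgn Γ j * v j :=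
  Iff.rfl

open Classical in
/-- The indicator-type vector of the class of `i₀`. -/
noncomputable def classVec (Δ Γ : Finset (Fin n)) (Λ : Setoid {i : Fin n // i ∉ Δ})
    (i₀ : {i : Fin n // i ∉ Δ}) : Fin n → ℝ :=
  fun k => if h : k ∈ Δ then 0 else if Λ.r ⟨k, h⟩ i₀ then sgn Γ k else 0

lemma classVec_mem (Δ Γ : Finset (Fin n)) (Λ : Setoid {i : Fin n // i ∉ Δ})
    (i₀ : {i : Fin n // i ∉ Δ}) :
    classVec Δ Γ Λ i₀ ∈ signedPartitionSubspace Δ Γ Λ := by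
  classical
  refine ⟨fun i hi => by simp [classVec, hi], fun i j hij => ?_⟩
  unfold classVec
  rcases i with ⟨i, hi⟩; rcases j with ⟨j, hj⟩
  simp only [dif_neg hi, dif_neg hj]
  by_cases h : Λ.r ⟨i, hi⟩ i₀
  · rw [if_pos h, if_pos (Λ.trans' (Λ.symm' hij) h)]
    show sgn Γ i * sgn Γ i = sgn Γ j * sgn Γ j
    rw [sgn_mul_self, sgn_mul_self]
  · rw [if_neg h, if_neg (fun hc => h (Λ.trans' hij hc))]
    simp

lemma classVec_apply_self (Δ Γ : Finset (Fin n)) (Λ : Setoid {i : Fin n // i ∉ Δ})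
    (i₀ : {i : Fin n // i ∉ Δ}) (k : {i : Fin n // i ∉ Δ}) (h : Λ.r k i₀) :
    classVec Δ Γ Λ i₀ k = sgn Γ k := by
  unfold classVec
  rw [dif_neg k.2, if_pos (by convert h)]

lemma classVec_apply_nrel (Δ Γ : Finset (Fin n)) (Λ : Setoid {i : Fin n // i ∉ Δ})
    (i₀ : {i : Fin n // i ∉ Δ}) (k : {i : Fin n // i ∉ Δ}) (h : ¬ Λ.r k i₀) :
    classVec Δ Γ Λ i₀ k = 0 := by
  unfold classVec
  rw [dif_neg k.2, if_neg (by convert h)]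

/-- Recovery of Δ from the subspace. -/
lemma mem_delta_iff (Δ Γ : Finset (Fin n)) (Λ : Setoid {i : Fin n // i ∉ Δ})
    (i : Fin n) :
    i ∈ Δ ↔ ∀ v ∈ signedPartitionSubspace Δ Γ Λ, v i = 0 := by
  constructor
  · exact fun hi v hv => hv.1 i hi
  · intro h
    by_contra hi
    have := h _ (classVec_mem Δ Γ Λ ⟨i, hi⟩)
    rw [classVec_apply_self Δ Γ Λ ⟨i, hi⟩ ⟨i, hi⟩ (Λ.refl' _)] at this
    exact sgn_ne_zero Γ i this

/-- Recovery of Λ from the subspace. -/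
lemma rel_iff (Δ Γ : Finset (Fin n)) (Λ : Setoid {i : Fin n // i ∉ Δ})
    (i j : {i : Fin n // i ∉ Δ}) :
    Λ.r i j ↔ ((∀ v ∈ signedPartitionSubspace Δ Γ Λ, v i = v j) ∨
      (∀ v ∈ signedPartitionSubspace Δ Γ Λ, v i = - v j)) := by
  constructor
  · intro hij
    by_cases hs : sgn Γ (i:Fin n) = sgn Γ (j:Fin n)
    · left; intro v hv
      exact eq_of_sgn ((mem_sps.mp hv).2 i j hij) (sgn_mul_self Γ i) hs
    · right; intro v hv
      have h1 : sgn Γ (i:Fin n) = - sgn Γ (j:Fin n) := by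
        rcases sgn_cases Γ (i:Fin n) with h | h <;>
          rcases sgn_cases Γ (j:Fin n) with h' | h' <;>
            rw [h, h'] at hs ⊢ <;> (norm_num at hs <;> norm_num)
      exact neg_of_sgn ((mem_sps.mp hv).2 i j hij) (sgn_mul_self Γ i)
        (sgn_mul_self Γ j) h1
  · intro h
    by_contra hij
    have h1 := classVec_apply_self Δ Γ Λ i i (Λ.refl' _)
    have h2 := classVec_apply_nrel Δ Γ Λ i j (fun hc => hij (Λ.symm' hc))
    have hm := classVec_mem Δ Γ Λ i
    rcases h with h | h
    · have := h _ hm; rw [h1, h2] at this; exact sgn_ne_zero Γ i this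
    · have := h _ hm; rw [h1, h2] at this
      exact sgn_ne_zero Γ i (by linarith)

/-- Recovery of the sign pattern. -/
lemma sign_iff (Δ Γ : Finset (Fin n)) (Λ : Setoid {i : Fin n // i ∉ Δ})
    (i j : {i : Fin n // i ∉ Δ}) (hij : Λ.r i j) :
    (∀ v ∈ signedPartitionSubspace Δ Γ Λ, v i = v j) ↔ sgn Γ i = sgn Γ j := by
  constructor
  · intro h
    have h1 := classVec_apply_self Δ Γ Λ i i (Λ.refl' _)
    have h2 := classVec_apply_self Δ Γ Λ i j (Λ.symm' hij)
    have := h _ (classVec_mem Δ Γ Λ i)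
    rw [h1, h2] at this; exact this
  · intro hs v hv
    exact eq_of_sgn ((mem_sps.mp hv).2 i j hij) (sgn_mul_self Γ i) hs



-- ### Section D : the action

lemma not_mem_image_inv {σ : Equiv.Perm (Fin n)} {Δ : Finset (Fin n)} {i : Fin n}
    (h : i ∉ Δ.image σ) : σ⁻¹ i ∉ Δ := fun hc =>
  h (Finset.mem_image.2 ⟨σ⁻¹ i, hc, by simp⟩)

/-- Transport of a partition along a permutation. -/
def permSetoid (σ : Equiv.Perm (Fin n)) (Δ : Finset (Fin n))
    (Λ : Setoid {i : Fin n // i ∉ Δ}) : Setoid {i : Fin n // i ∉ Δ.image σ} where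
  r i j := Λ.r ⟨σ⁻¹ i, not_mem_image_inv i.2⟩ ⟨σ⁻¹ j, not_mem_image_inv j.2⟩
  iseqv := ⟨fun _ => Λ.refl' _, Λ.symm', Λ.trans'⟩

open Classical in
/-- Transport of the sign set along a signed permutation. -/
noncomputable def permGamma (σ : Equiv.Perm (Fin n)) (ε : Fin n → ℝ)
    (Δ Γ : Finset (Fin n)) : Finset (Fin n) :=
  Finset.univ.filter fun i => i ∉ Δ.image σ ∧ ε i * sgn Γ (σ⁻¹ i) = 1

lemma sgn_permGamma {σ : Equiv.Perm (Fin n)} {ε : Fin n → ℝ}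
    (hε : ∀ i, ε i = 1 ∨ ε i = -1) (Δ Γ : Finset (Fin n)) {i : Fin n}
    (hi : i ∉ Δ.image σ) : sgn (permGamma σ ε Δ Γ) i = ε i * sgn Γ (σ⁻¹ i) := by
  classical
  by_cases h : ε i * sgn Γ (σ⁻¹ i) = 1
  · have hm : i ∈ permGamma σ ε Δ Γ := Finset.mem_filter.2 ⟨Finset.mem_univ _, hi, h⟩
    rw [show sgn (permGamma σ ε Δ Γ) i = 1 from if_pos hm, h]
  · have hm : i ∉ permGamma σ ε Δ Γ := fun hc => h (Finset.mem_filter.1 hc).2.2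
    rw [show sgn (permGamma σ ε Δ Γ) i = -1 from if_neg hm]
    rcases hε i with h1 | h1 <;> rcases sgn_cases Γ (σ⁻¹ i) with h2 | h2 <;>
      rw [h1, h2] at h ⊢ <;> (norm_num at h <;> norm_num)

lemma eps_sq {ε : Fin n → ℝ} (hε : ∀ i, ε i = 1 ∨ ε i = -1) (i : Fin n) :
    ε i * ε i = 1 := by rcases hε i with h | h <;> rw [h] <;> norm_num

lemma permGamma_subset (σ : Equiv.Perm (Fin n)) (ε : Fin n → ℝ)
    (Δ Γ : Finset (Fin n)) : ∀ i ∈ permGamma σ ε Δ Γ, i ∉ Δ.image σ := by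
  classical
  intro i hi
  exact (Finset.mem_filter.1 hi).2.1

/-- The key computation: the image of `X(Δ,Γ,Λ)` under a signed permutation map. -/
lemma map_sps {g : (Fin n → ℝ) ≃ₗ[ℝ] (Fin n → ℝ)} {σ : Equiv.Perm (Fin n)}
    {ε : Fin n → ℝ} (hε : ∀ i, ε i = 1 ∨ ε i = -1)
    (hg : ∀ (v : Fin n → ℝ) (i : Fin n), g v i = ε i * v (σ⁻¹ i))
    (Δ Γ : Finset (Fin n)) (Λ : Setoid {i : Fin n // i ∉ Δ}) :
    (signedPartitionSubspace Δ Γ Λ).map (g : (Fin n → ℝ) →ₗ[ℝ] (Fin n → ℝ)) =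
      signedPartitionSubspace (Δ.image σ) (permGamma σ ε Δ Γ) (permSetoid σ Δ Λ) := by
  classical
  ext w
  simp only [Submodule.mem_map, LinearEquiv.coe_coe]
  constructor
  · rintro ⟨v, hv, rfl⟩
    rw [mem_sps]
    constructor
    · intro i hi
      rcases Finset.mem_image.1 hi with ⟨i₀, hi₀, rfl⟩
      rw [hg, show σ⁻¹ (σ i₀) = i₀ by simp, (mem_sps.1 hv).1 i₀ hi₀, mul_zero]
    · intro i j hij
      rw [hg, hg, sgn_permGamma hε Δ Γ i.2, sgn_permGamma hε Δ Γ j.2]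
      have h1 := (mem_sps.1 hv).2 _ _ hij
      calc ε (i:Fin n) * sgn Γ (σ⁻¹ i) * (ε (i:Fin n) * v (σ⁻¹ i))
          = (ε (i:Fin n) * ε (i:Fin n)) * (sgn Γ (σ⁻¹ i) * v (σ⁻¹ i)) := by ring
        _ = (ε (j:Fin n) * ε (j:Fin n)) * (sgn Γ (σ⁻¹ j) * v (σ⁻¹ j)) := by
            rw [eps_sq hε, eps_sq hε, h1]
        _ = ε (j:Fin n) * sgn Γ (σ⁻¹ j) * (ε (j:Fin n) * v (σ⁻¹ j)) := by ring
  · intro hw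
    refine ⟨fun k => ε (σ k) * w (σ k), ?_, ?_⟩
    · rw [mem_sps]
      constructor
      · intro i hi
        have : (σ i : Fin n) ∈ Δ.image σ := Finset.mem_image.2 ⟨i, hi, rfl⟩
        rw [(mem_sps.1 hw).1 _ this, mul_zero]
      · intro i j hij
        have hi' : (σ (i:Fin n)) ∉ Δ.image σ := fun hc => by
          rcases Finset.mem_image.1 hc with ⟨k, hk, hk'⟩
          exact i.2 (by rwa [σ.injective hk'] at hk)
        have hj' : (σ (j:Fin n)) ∉ Δ.image σ := fun hc => by
          rcases Finset.mem_image.1 hc with ⟨k, hk, hk'⟩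
          exact j.2 (by rwa [σ.injective hk'] at hk)
        have hrel : (permSetoid σ Δ Λ).r ⟨σ i, hi'⟩ ⟨σ j, hj'⟩ := by
          show Λ.r _ _
          convert hij <;> simp
        have h2 := (mem_sps.1 hw).2 ⟨σ i, hi'⟩ ⟨σ j, hj'⟩ hrel
        rw [sgn_permGamma hε Δ Γ hi', sgn_permGamma hε Δ Γ hj'] at h2
        simp only [show σ⁻¹ (σ (i:Fin n)) = i by simp,
          show σ⁻¹ (σ (j:Fin n)) = j by simp] at h2
        calc sgn Γ (i:Fin n) * (ε (σ i) * w (σ i))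
            = ε (σ (i:Fin n)) * sgn Γ i * w (σ i) := by ring
          _ = ε (σ (j:Fin n)) * sgn Γ j * w (σ j) := h2
          _ = sgn Γ (j:Fin n) * (ε (σ j) * w (σ j)) := by ring
    · funext i
      rw [hg]
      simp only [show σ (σ⁻¹ i) = i by simp]
      rw [← mul_assoc, eps_sq hε, one_mul]

/-- The linear map attached to `(σ, ε)`. -/
noncomputable def gSigned (σ : Equiv.Perm (Fin n)) (ε : Fin n → ℝ)
    (hε : ∀ i, ε i = 1 ∨ ε i = -1) : (Fin n → ℝ) ≃ₗ[ℝ] (Fin n → ℝ) where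
  toFun v i := ε i * v (σ⁻¹ i)
  invFun w k := ε (σ k) * w (σ k)
  map_add' v w := by funext i; simp [Pi.add_apply]; ring
  map_smul' c v := by funext i; simp [Pi.smul_apply]; ring
  left_inv v := by
    funext k
    simp only []
    rw [show σ⁻¹ (σ k) = k by simp, ← mul_assoc, eps_sq hε, one_mul]
  right_inv w := by
    funext i
    simp only []
    rw [show σ (σ⁻¹ i) = i by simp, ← mul_assoc, eps_sq hε, one_mul]

lemma gSigned_mem (σ : Equiv.Perm (Fin n)) (ε : Fin n → ℝ)
    (hε : ∀ i, ε i = 1 ∨ ε i = -1) : gSigned σ ε hε ∈ weylB n :=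
  ⟨σ, ε, hε, fun _ _ => rfl⟩

lemma gSigned_apply (σ : Equiv.Perm (Fin n)) (ε : Fin n → ℝ)
    (hε : ∀ i, ε i = 1 ∨ ε i = -1) (v : Fin n → ℝ) (i : Fin n) :
    gSigned σ ε hε v i = ε i * v (σ⁻¹ i) := rfl



end SPSMain
end SPS


namespace SPS
section SPSMain2
variable {n : ℕ}
open Classical

-- ### Section E : data recovery from subspace equality

lemma delta_eq_of_sps_eq {Δ₁ Δ₂ Γ₁ Γ₂ : Finset (Fin n)}
    {Λ₁ : Setoid {i : Fin n // i ∉ Δ₁}} {Λ₂ : Setoid {i : Fin n // i ∉ Δ₂}}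
    (h : signedPartitionSubspace Δ₁ Γ₁ Λ₁ = signedPartitionSubspace Δ₂ Γ₂ Λ₂) :
    Δ₁ = Δ₂ := by
  ext i
  rw [mem_delta_iff Δ₁ Γ₁ Λ₁ i, mem_delta_iff Δ₂ Γ₂ Λ₂ i, h]

lemma setoid_eq_of_sps_eq {Δ Γ₁ Γ₂ : Finset (Fin n)}
    {Λ₁ Λ₂ : Setoid {i : Fin n // i ∉ Δ}}
    (h : signedPartitionSubspace Δ Γ₁ Λ₁ = signedPartitionSubspace Δ Γ₂ Λ₂) :
    Λ₁ = Λ₂ := by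
  apply Setoid.ext
  intro i j
  rw [show (Λ₁ i j) = Λ₁.r i j from rfl, show (Λ₂ i j) = Λ₂.r i j from rfl,
    rel_iff Δ Γ₁ Λ₁ i j, rel_iff Δ Γ₂ Λ₂ i j, h]

lemma sign_rel_of_sps_eq {Δ Γ₁ Γ₂ : Finset (Fin n)}
    {Λ₁ Λ₂ : Setoid {i : Fin n // i ∉ Δ}}
    (h : signedPartitionSubspace Δ Γ₁ Λ₁ = signedPartitionSubspace Δ Γ₂ Λ₂)
    (i j : {i : Fin n // i ∉ Δ}) (hr : Λ₁.r i j) :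
    sgn Γ₁ i * sgn Γ₂ i = sgn Γ₁ j * sgn Γ₂ j := by
  have hr₂ : Λ₂.r i j := by rw [← setoid_eq_of_sps_eq h]; exact hr
  have hiff : (sgn Γ₁ (i : Fin n) = sgn Γ₁ (j : Fin n)) ↔
      (sgn Γ₂ (i : Fin n) = sgn Γ₂ (j : Fin n)) := by
    rw [← sign_iff Δ Γ₁ Λ₁ i j hr, ← sign_iff Δ Γ₂ Λ₂ i j hr₂, h]
  rcases sgn_cases Γ₁ (i : Fin n) with h1 | h1 <;>
    rcases sgn_cases Γ₁ (j : Fin n) with h2 | h2 <;>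
      rcases sgn_cases Γ₂ (i : Fin n) with h3 | h3 <;>
        rcases sgn_cases Γ₂ (j : Fin n) with h4 | h4 <;>
          rw [h1, h2, h3, h4] at hiff ⊢ <;> (norm_num at hiff <;> norm_num)

lemma mem_sps_of_data {Δ Γ₁ Γ₂ : Finset (Fin n)}
    {Λ₁ Λ₂ : Setoid {i : Fin n // i ∉ Δ}}
    (hΛ : ∀ i j, Λ₁.r i j ↔ Λ₂.r i j)
    (hs : ∀ i j, Λ₁.r i j → sgn Γ₁ i * sgn Γ₂ i = sgn Γ₁ j * sgn Γ₂ j)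
    {v : Fin n → ℝ} (hv : v ∈ signedPartitionSubspace Δ Γ₁ Λ₁) :
    v ∈ signedPartitionSubspace Δ Γ₂ Λ₂ := by
  rw [mem_sps] at hv ⊢
  refine ⟨hv.1, fun i j hij => ?_⟩
  have hij₁ : Λ₁.r i j := (hΛ i j).2 hij
  have h1 := hv.2 i j hij₁
  have h2 := hs i j hij₁
  calc sgn Γ₂ (i : Fin n) * v i
      = (sgn Γ₁ i * sgn Γ₁ i) * (sgn Γ₂ i * v i) := by
        rw [sgn_mul_self, one_mul]
    _ = (sgn Γ₁ i * sgn Γ₂ i) * (sgn Γ₁ i * v i) := by ring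
    _ = (sgn Γ₁ j * sgn Γ₂ j) * (sgn Γ₁ j * v j) := by rw [h1, h2]
    _ = (sgn Γ₁ j * sgn Γ₁ j) * (sgn Γ₂ j * v j) := by ring
    _ = sgn Γ₂ (j : Fin n) * v j := by rw [sgn_mul_self, one_mul]

lemma sps_eq_of_data {Δ Γ₁ Γ₂ : Finset (Fin n)}
    {Λ₁ Λ₂ : Setoid {i : Fin n // i ∉ Δ}}
    (hΛ : ∀ i j, Λ₁.r i j ↔ Λ₂.r i j)
    (hs : ∀ i j, Λ₁.r i j → sgn Γ₁ i * sgn Γ₂ i = sgn Γ₁ j * sgn Γ₂ j) :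
    signedPartitionSubspace Δ Γ₁ Λ₁ = signedPartitionSubspace Δ Γ₂ Λ₂ := by
  apply le_antisymm
  · intro v hv; exact mem_sps_of_data hΛ hs hv
  · intro v hv
    refine mem_sps_of_data (fun i j => (hΛ i j).symm) (fun i j hij => ?_) hv
    have := hs i j ((hΛ i j).2 hij)
    linarith [this]

-- ### Section N : minimal representatives and normalization

variable (Δ : Finset (Fin n)) (Λ : Setoid {i : Fin n // i ∉ Δ})

/-- An element is the minimal representative of its block. -/
def isMinRep (i : {i : Fin n // i ∉ Δ}) : Prop :=
  ∀ k, Λ.r i k → i ≤ k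

/-- The block of `i` as a finset. -/
noncomputable def blockFinset (i : {i : Fin n // i ∉ Δ}) :
    Finset {i : Fin n // i ∉ Δ} :=
  Finset.univ.filter fun k => Λ.r i k

lemma mem_blockFinset_self (i : {i : Fin n // i ∉ Δ}) : i ∈ blockFinset Δ Λ i :=
  Finset.mem_filter.2 ⟨Finset.mem_univ i, Λ.refl' i⟩

/-- The minimal representative of the block of `i`. -/
noncomputable def repFun (i : {i : Fin n // i ∉ Δ}) : {i : Fin n // i ∉ Δ} :=
  (blockFinset Δ Λ i).min' ⟨i, mem_blockFinset_self Δ Λ i⟩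

lemma repFun_rel (i : {i : Fin n // i ∉ Δ}) : Λ.r i (repFun Δ Λ i) := by
  have := (blockFinset Δ Λ i).min'_mem ⟨i, mem_blockFinset_self Δ Λ i⟩
  exact (Finset.mem_filter.1 this).2

lemma repFun_eq_of_rel {i j : {i : Fin n // i ∉ Δ}} (h : Λ.r i j) :
    repFun Δ Λ i = repFun Δ Λ j := by
  have hb : blockFinset Δ Λ i = blockFinset Δ Λ j := by
    ext k
    simp only [blockFinset, Finset.mem_filter, Finset.mem_univ, true_and]
    exact ⟨fun hk => Λ.trans' (Λ.symm' h) hk, fun hk => Λ.trans' h hk⟩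
  simp only [repFun, hb]

lemma isMinRep_repFun (i : {i : Fin n // i ∉ Δ}) : isMinRep Δ Λ (repFun Δ Λ i) := by
  intro k hk
  apply Finset.min'_le
  exact Finset.mem_filter.2 ⟨Finset.mem_univ k,
    Λ.trans' (repFun_rel Δ Λ i) hk⟩

lemma repFun_eq_self {i : {i : Fin n // i ∉ Δ}} (h : isMinRep Δ Λ i) :
    repFun Δ Λ i = i := by
  apply le_antisymm
  · exact Finset.min'_le _ _ (mem_blockFinset_self Δ Λ i)
  · exact h _ (repFun_rel Δ Λ i)

/-- Minimal representatives are in bijection with blocks. -/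
noncomputable def minRepEquiv : {i : {i : Fin n // i ∉ Δ} // isMinRep Δ Λ i} ≃ Quotient Λ where
  toFun x := Quotient.mk Λ x.1
  invFun q := ⟨repFun Δ Λ (Quotient.out q), isMinRep_repFun Δ Λ _⟩
  left_inv := by
    rintro ⟨i, hi⟩
    apply Subtype.ext
    show repFun Δ Λ (Quotient.out (Quotient.mk Λ i)) = i
    have h1 : Λ.r (Quotient.out (Quotient.mk Λ i)) i := Quotient.mk_out i
    rw [repFun_eq_of_rel Δ Λ h1, repFun_eq_self Δ Λ hi]
  right_inv q := by
    have h1 : Λ.r (Quotient.out q) (repFun Δ Λ (Quotient.out q)) :=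
      repFun_rel Δ Λ _
    calc Quotient.mk Λ (repFun Δ Λ (Quotient.out q))
        = Quotient.mk Λ (Quotient.out q) := (Quotient.sound h1).symm
      _ = q := Quotient.out_eq q

/-- The coordinates on which the sign is free after normalization. -/
noncomputable def freeSet : Finset (Fin n) :=
  Finset.univ.filter fun i => ∃ h : i ∉ Δ, ¬ isMinRep Δ Λ ⟨i, h⟩

lemma freeSet_eq : freeSet Δ Λ =
    Finset.image Subtype.val
      (Finset.univ.filter fun i : {i : Fin n // i ∉ Δ} => ¬ isMinRep Δ Λ i) := by
  ext i
  constructor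
  · intro hmem
    obtain ⟨h, hmin⟩ := (Finset.mem_filter.1 hmem).2
    exact Finset.mem_image.2 ⟨⟨i, h⟩, Finset.mem_filter.2 ⟨Finset.mem_univ _, hmin⟩, rfl⟩
  · intro hmem
    obtain ⟨⟨a, ha⟩, hmem', rfl⟩ := Finset.mem_image.1 hmem
    exact Finset.mem_filter.2 ⟨Finset.mem_univ _, ⟨ha, (Finset.mem_filter.1 hmem').2⟩⟩

lemma card_subtype_not_mem : Fintype.card {i : Fin n // i ∉ Δ} = n - Δ.card := by
  rw [Fintype.card_subtype_compl, Fintype.card_fin]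
  congr 1
  exact Fintype.card_coe Δ

lemma card_freeSet :
    (freeSet Δ Λ).card = (n - Δ.card) - Multiset.card (blockSizes Λ) := by
  rw [freeSet_eq, Finset.card_image_of_injective _ Subtype.val_injective]
  have h1 : (Finset.univ.filter fun i : {i : Fin n // i ∉ Δ} =>
      ¬ isMinRep Δ Λ i).card =
      Fintype.card {i : {i : Fin n // i ∉ Δ} // ¬ isMinRep Δ Λ i} :=
    (Fintype.card_subtype _).symm
  rw [h1, Fintype.card_subtype_compl, card_subtype_not_mem]
  congr 1
  rw [Fintype.card_congr (minRepEquiv Δ Λ), card_blockSizes]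

end SPSMain2
end SPS


namespace SPS
section SPSMain3
variable {n : ℕ}
open Classical

-- ### Section F : normalization of the sign set, and the backward construction

lemma sgn_pos {Γ : Finset (Fin n)} {i : Fin n} (h : i ∈ Γ) : sgn Γ i = 1 := if_pos h
lemma sgn_neg {Γ : Finset (Fin n)} {i : Fin n} (h : i ∉ Γ) : sgn Γ i = -1 := if_neg h

variable (Δ : Finset (Fin n)) (Λ : Setoid {i : Fin n // i ∉ Δ})

/-- The normalized sign set. -/
noncomputable def normGamma (Γ : Finset (Fin n)) : Finset (Fin n) :=
  Finset.univ.filter fun i =>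
    ∃ h : i ∉ Δ, ¬ ((i ∈ Γ) ↔ ((repFun Δ Λ ⟨i, h⟩ : {i : Fin n // i ∉ Δ}) : Fin n) ∈ Γ)

lemma normGamma_subset (Γ : Finset (Fin n)) : normGamma Δ Λ Γ ⊆ freeSet Δ Λ := by
  intro i hi
  obtain ⟨h, hne⟩ := (Finset.mem_filter.1 hi).2
  refine Finset.mem_filter.2 ⟨Finset.mem_univ _, h, fun hmin => hne ?_⟩
  rw [repFun_eq_self Δ Λ hmin]

lemma mem_freeSet_not_delta {i : Fin n} (h : i ∈ freeSet Δ Λ) : i ∉ Δ :=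
  (Finset.mem_filter.1 h).2.choose

lemma not_isMinRep_of_mem_freeSet {i : {i : Fin n // i ∉ Δ}}
    (h : (i : Fin n) ∈ freeSet Δ Λ) : ¬ isMinRep Δ Λ i := by
  obtain ⟨h', hmin⟩ := (Finset.mem_filter.1 h).2
  exact hmin

lemma repFun_not_mem_of_subset {Γ : Finset (Fin n)} (hΓ : Γ ⊆ freeSet Δ Λ)
    (i : {i : Fin n // i ∉ Δ}) : ((repFun Δ Λ i : {i : Fin n // i ∉ Δ}) : Fin n) ∉ Γ := by
  intro hc
  exact not_isMinRep_of_mem_freeSet Δ Λ (hΓ hc) (isMinRep_repFun Δ Λ i)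

lemma sgn_normGamma (Γ : Finset (Fin n)) (i : {i : Fin n // i ∉ Δ}) :
    sgn (normGamma Δ Λ Γ) i =
      -(sgn Γ i * sgn Γ ((repFun Δ Λ i : {i : Fin n // i ∉ Δ}) : Fin n)) := by
  by_cases hm : ((i : Fin n) ∈ Γ) ↔ ((repFun Δ Λ i : {i : Fin n // i ∉ Δ}) : Fin n) ∈ Γ
  · have hni : (i : Fin n) ∉ normGamma Δ Λ Γ := by
      intro hc
      obtain ⟨h', hne⟩ := (Finset.mem_filter.1 hc).2
      exact hne hm
    rw [sgn_neg hni]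
    by_cases h1 : (i : Fin n) ∈ Γ
    · rw [sgn_pos h1, sgn_pos (hm.1 h1)]; norm_num
    · rw [sgn_neg h1, sgn_neg (fun hc => h1 (hm.2 hc))]; norm_num
  · have hni : (i : Fin n) ∈ normGamma Δ Λ Γ :=
      Finset.mem_filter.2 ⟨Finset.mem_univ _, i.2, hm⟩
    rw [sgn_pos hni]
    by_cases h1 : (i : Fin n) ∈ Γ
    · rw [sgn_pos h1, sgn_neg (fun hc => hm ⟨fun _ => hc, fun _ => h1⟩)]; norm_num
    · rw [sgn_neg h1, sgn_pos (by
        by_contra hc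
        exact hm ⟨fun h => absurd h h1, fun h => absurd h hc⟩)]
      norm_num

lemma sps_normGamma (Γ : Finset (Fin n)) :
    signedPartitionSubspace Δ Γ Λ =
      signedPartitionSubspace Δ (normGamma Δ Λ Γ) Λ := by
  apply sps_eq_of_data (fun _ _ => Iff.rfl)
  intro i j hij
  have key : ∀ (s t : ℝ), s * s = 1 → s * -(s * t) = -t := by
    intro s t hs
    calc s * -(s * t) = -((s * s) * t) := by ring
      _ = -t := by rw [hs, one_mul]
  rw [sgn_normGamma Δ Λ Γ i, sgn_normGamma Δ Λ Γ j,
    key _ _ (sgn_mul_self Γ (i : Fin n)), key _ _ (sgn_mul_self Γ (j : Fin n)),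
    repFun_eq_of_rel Δ Λ hij]

lemma gamma_eq_of_sps_eq {Γ₁ Γ₂ : Finset (Fin n)}
    (h1 : Γ₁ ⊆ freeSet Δ Λ) (h2 : Γ₂ ⊆ freeSet Δ Λ)
    (h : signedPartitionSubspace Δ Γ₁ Λ = signedPartitionSubspace Δ Γ₂ Λ) :
    Γ₁ = Γ₂ := by
  ext i
  by_cases hd : i ∉ Δ
  · have key := sign_rel_of_sps_eq h ⟨i, hd⟩ (repFun Δ Λ ⟨i, hd⟩)
      (repFun_rel Δ Λ ⟨i, hd⟩)
    rw [sgn_neg (repFun_not_mem_of_subset Δ Λ h1 ⟨i, hd⟩),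
      sgn_neg (repFun_not_mem_of_subset Δ Λ h2 ⟨i, hd⟩)] at key
    norm_num at key
    constructor
    · intro hc
      by_contra hc2
      rw [sgn_pos hc, sgn_neg hc2] at key
      norm_num at key
    · intro hc
      by_contra hc2
      rw [sgn_neg hc2, sgn_pos hc] at key
      norm_num at key
  · push_neg at hd
    constructor
    · intro hc; exact absurd hd (mem_freeSet_not_delta Δ Λ (h1 hc))
    · intro hc; exact absurd hd (mem_freeSet_not_delta Δ Λ (h2 hc))

/-- The equivalence of complements induced by a permutation. -/
def imgEquiv (σ : Equiv.Perm (Fin n)) (Δ : Finset (Fin n)) :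
    {i : Fin n // i ∉ Δ} ≃ {i : Fin n // i ∉ Δ.image σ} where
  toFun i := ⟨σ i, fun hc => by
    rcases Finset.mem_image.1 hc with ⟨k, hk, hk'⟩
    exact i.2 (by rwa [σ.injective hk'] at hk)⟩
  invFun j := ⟨σ⁻¹ j, not_mem_image_inv j.2⟩
  left_inv i := by apply Subtype.ext; simp
  right_inv j := by apply Subtype.ext; simp

lemma imgEquiv_rel (σ : Equiv.Perm (Fin n)) (Δ : Finset (Fin n))
    (Λ : Setoid {i : Fin n // i ∉ Δ}) (a b : {i : Fin n // i ∉ Δ}) :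
    (permSetoid σ Δ Λ).r (imgEquiv σ Δ a) (imgEquiv σ Δ b) ↔ Λ.r a b := by
  show Λ.r ⟨σ⁻¹ (σ a), _⟩ ⟨σ⁻¹ (σ b), _⟩ ↔ Λ.r a b
  have ha : (⟨σ⁻¹ (σ a), not_mem_image_inv (imgEquiv σ Δ a).2⟩ :
      {i : Fin n // i ∉ Δ}) = a := by apply Subtype.ext; simp
  have hb : (⟨σ⁻¹ (σ b), not_mem_image_inv (imgEquiv σ Δ b).2⟩ :
      {i : Fin n // i ∉ Δ}) = b := by apply Subtype.ext; simp
  rw [ha, hb]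

lemma blockSizes_permSetoid (σ : Equiv.Perm (Fin n)) (Δ : Finset (Fin n))
    (Λ : Setoid {i : Fin n // i ∉ Δ}) :
    blockSizes (permSetoid σ Δ Λ) = blockSizes Λ :=
  (blockSizes_congr (imgEquiv σ Δ) (imgEquiv_rel σ Δ Λ)).symm

end SPSMain3
end SPS


namespace SPS
-- ### Section H : backward construction and orbit parametrization

lemma bLambda_pos (lam : Multiset ℕ) : 0 < bLambda lam :=
  Finset.prod_pos fun i _ =>
    Nat.mul_pos (Nat.factorial_pos _) (Nat.pow_pos (Nat.factorial_pos i))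

lemma card_sigma_nat {ι : Type*} [Fintype ι] (f : ι → Type*) [∀ i, Fintype (f i)] :
    Nat.card (Σ i, f i) = ∑ i, Nat.card (f i) := by
  rw [Nat.card_eq_fintype_card, Fintype.card_sigma]
  exact Finset.sum_congr rfl fun i _ => Nat.card_eq_fintype_card.symm

lemma nat_card_subsets {n : ℕ} (T : Finset (Fin n)) :
    Nat.card {G : Finset (Fin n) // G ⊆ T} = 2 ^ T.card := by
  classical
  rw [Nat.card_congr (Equiv.subtypeEquivRight fun G => (Finset.mem_powerset (s := G) (t := T)).symm),
    Nat.card_eq_fintype_card, Fintype.card_coe, Finset.card_powerset]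

section Constr
variable {n : ℕ}
open Classical

/-- Equality of subspaces with different (but equal) `Δ`s. -/
lemma sps_eq_of_data' {Δ₁ Δ₂ : Finset (Fin n)} (hΔ : Δ₁ = Δ₂)
    {Γ₁ Γ₂ : Finset (Fin n)} {Λ₁ : Setoid {i : Fin n // i ∉ Δ₁}}
    {Λ₂ : Setoid {i : Fin n // i ∉ Δ₂}}
    (hΛ : ∀ (i j : Fin n) (hi₁ : i ∉ Δ₁) (hj₁ : j ∉ Δ₁) (hi₂ : i ∉ Δ₂)
      (hj₂ : j ∉ Δ₂), Λ₁.r ⟨i, hi₁⟩ ⟨j, hj₁⟩ ↔ Λ₂.r ⟨i, hi₂⟩ ⟨j, hj₂⟩)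
    (hs : ∀ (i j : Fin n) (hi₁ : i ∉ Δ₁) (hj₁ : j ∉ Δ₁),
      Λ₁.r ⟨i, hi₁⟩ ⟨j, hj₁⟩ → sgn Γ₁ i * sgn Γ₂ i = sgn Γ₁ j * sgn Γ₂ j) :
    signedPartitionSubspace Δ₁ Γ₁ Λ₁ = signedPartitionSubspace Δ₂ Γ₂ Λ₂ := by
  subst hΔ
  exact sps_eq_of_data (fun i j => hΛ i.1 j.1 i.2 j.2 i.2 j.2)
    (fun i j hij => hs i.1 j.1 i.2 j.2 hij)

/-- Backward direction: equal invariants give an element of the Weyl group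
mapping one subspace to the other. -/
lemma exists_weyl_map (Δ Δ' Γ Γ' : Finset (Fin n))
    (Λ : Setoid {i : Fin n // i ∉ Δ}) (Λ' : Setoid {i : Fin n // i ∉ Δ'})
    (hcard : Δ.card = Δ'.card) (hbs : blockSizes Λ = blockSizes Λ') :
    ∃ g ∈ weylB n,
      signedPartitionSubspace Δ' Γ' Λ' =
        (signedPartitionSubspace Δ Γ Λ).map (g : (Fin n → ℝ) →ₗ[ℝ] (Fin n → ℝ)) := by
  classical
  obtain ⟨e, he⟩ := exists_relEquiv_of_blockSizes_eq Λ Λ' hbs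
  have hd : Fintype.card {i : Fin n // i ∈ Δ} = Fintype.card {i : Fin n // i ∈ Δ'} := by
    rw [Fintype.card_coe, Fintype.card_coe]
    exact hcard
  set d1 := Fintype.equivOfCardEq hd with hd1
  set σ : Equiv.Perm (Fin n) := Equiv.subtypeCongr d1 e with hσ
  have hσin : ∀ i (hi : i ∈ Δ), σ i = (d1 ⟨i, hi⟩ : Fin n) := by
    intro i hi
    rw [hσ]
    unfold Equiv.subtypeCongr
    simp [hi]
  have hσout : ∀ (i : {i : Fin n // i ∉ Δ}), σ (i : Fin n) = (e i : Fin n) := by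
    intro i
    rw [hσ]
    unfold Equiv.subtypeCongr
    simp [i.2]
  have himg : Δ.image σ = Δ' := by
    apply Finset.eq_of_subset_of_card_le
    · intro i hi
      rcases Finset.mem_image.1 hi with ⟨k, hk, rfl⟩
      rw [hσin k hk]
      exact (d1 ⟨k, hk⟩).2
    · rw [Finset.card_image_of_injective Δ σ.injective, ← hcard]
  set ε : Fin n → ℝ := fun i => sgn Γ' i * sgn Γ (σ⁻¹ i) with hεdef
  have hε : ∀ i, ε i = 1 ∨ ε i = -1 := by
    intro i
    show sgn Γ' i * sgn Γ (σ⁻¹ i) = 1 ∨ sgn Γ' i * sgn Γ (σ⁻¹ i) = -1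
    rcases sgn_cases Γ' i with h1 | h1 <;> rcases sgn_cases Γ (σ⁻¹ i) with h2 | h2 <;>
      rw [h1, h2] <;> norm_num
  refine ⟨gSigned σ ε hε, gSigned_mem σ ε hε, ?_⟩
  rw [map_sps hε (fun v i => rfl) Δ Γ Λ]
  have hsub : ∀ (i : Fin n) (hi : i ∉ Δ.image σ),
      (e ⟨σ⁻¹ i, not_mem_image_inv hi⟩ : Fin n) = i := by
    intro i hi
    rw [← hσout ⟨σ⁻¹ i, not_mem_image_inv hi⟩]
    simp
  have hgam : ∀ (k : Fin n), k ∉ Δ.image σ →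
      sgn (permGamma σ ε Δ Γ) k = sgn Γ' k := by
    intro k hk
    rw [sgn_permGamma hε Δ Γ hk]
    show sgn Γ' k * sgn Γ (σ⁻¹ k) * sgn Γ (σ⁻¹ k) = sgn Γ' k
    calc sgn Γ' k * sgn Γ (σ⁻¹ k) * sgn Γ (σ⁻¹ k)
        = sgn Γ' k * (sgn Γ (σ⁻¹ k) * sgn Γ (σ⁻¹ k)) := by ring
      _ = sgn Γ' k := by rw [sgn_mul_self, mul_one]
  apply sps_eq_of_data' himg.symm
  · intro i j hi₁ hj₁ hi₂ hj₂
    constructor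
    · intro hr
      show Λ.r _ _
      apply (he _ _).1
      have h1 : (e ⟨σ⁻¹ i, not_mem_image_inv hi₂⟩ : {i : Fin n // i ∉ Δ'}) =
          ⟨i, hi₁⟩ := Subtype.ext (by rw [hsub i hi₂])
      have h2 : (e ⟨σ⁻¹ j, not_mem_image_inv hj₂⟩ : {i : Fin n // i ∉ Δ'}) =
          ⟨j, hj₁⟩ := Subtype.ext (by rw [hsub j hj₂])
      rw [h1, h2]
      exact hr
    · intro hr
      have hr' : Λ.r ⟨σ⁻¹ i, not_mem_image_inv hi₂⟩ ⟨σ⁻¹ j, not_mem_image_inv hj₂⟩ := hr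
      have := (he _ _).2 hr'
      have h1 : (e ⟨σ⁻¹ i, not_mem_image_inv hi₂⟩ : {i : Fin n // i ∉ Δ'}) =
          ⟨i, hi₁⟩ := Subtype.ext (by rw [hsub i hi₂])
      have h2 : (e ⟨σ⁻¹ j, not_mem_image_inv hj₂⟩ : {i : Fin n // i ∉ Δ'}) =
          ⟨j, hj₁⟩ := Subtype.ext (by rw [hsub j hj₂])
      rw [h1, h2] at this
      exact this
  · intro i j hi₁ hj₁ _
    have hi₂ : i ∉ Δ.image σ := himg.symm ▸ hi₁
    have hj₂ : j ∉ Δ.image σ := himg.symm ▸ hj₁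
    rw [hgam i hi₂, hgam j hj₂, sgn_mul_self, sgn_mul_self]

/-- Forward direction: a Weyl-group element mapping one subspace to the other
forces equal invariants. -/
lemma invariants_of_map {Δ Δ' Γ Γ' : Finset (Fin n)}
    {Λ : Setoid {i : Fin n // i ∉ Δ}} {Λ' : Setoid {i : Fin n // i ∉ Δ'}}
    {g : (Fin n → ℝ) ≃ₗ[ℝ] (Fin n → ℝ)} (hg : g ∈ weylB n)
    (h : signedPartitionSubspace Δ' Γ' Λ' =
      (signedPartitionSubspace Δ Γ Λ).map (g : (Fin n → ℝ) →ₗ[ℝ] (Fin n → ℝ))) :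
    Δ.card = Δ'.card ∧ blockSizes Λ = blockSizes Λ' := by
  obtain ⟨σ, ε, hε, hgf⟩ := hg
  rw [map_sps hε hgf Δ Γ Λ] at h
  have hΔ : Δ' = Δ.image σ := delta_eq_of_sps_eq h
  subst hΔ
  have hΛ : Λ' = permSetoid σ Δ Λ := setoid_eq_of_sps_eq h
  constructor
  · rw [Finset.card_image_of_injective Δ σ.injective]
  · rw [hΛ, blockSizes_permSetoid]

/-- The number of setoids on the complement of `D` with given block sizes. -/
lemma nat_card_shape (Δ D : Finset (Fin n)) (hD : D.card = Δ.card)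
    (Λ : Setoid {i : Fin n // i ∉ Δ}) :
    Nat.card {S : Setoid {i : Fin n // i ∉ D} // blockSizes S = blockSizes Λ} *
      bLambda (blockSizes Λ) = (n - Δ.card).factorial := by
  classical
  have hc : Fintype.card {i : Fin n // i ∉ Δ} = Fintype.card {i : Fin n // i ∉ D} := by
    rw [card_subtype_not_mem, card_subtype_not_mem, hD]
  set e := Fintype.equivOfCardEq hc with he
  set Λ₀ : Setoid {i : Fin n // i ∉ D} := Setoid.comap ⇑e.symm Λ with hΛ₀
  have h0 : blockSizes Λ = blockSizes Λ₀ := by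
    apply blockSizes_congr e
    intro a b
    show Λ.r (e.symm (e a)) (e.symm (e b)) ↔ Λ.r a b
    simp
  have key := card_shape_mul_bLambda Λ₀
  rw [← h0] at key
  rw [key, card_subtype_not_mem, hD]

end Constr

end SPS

/-- Two subspaces `X(Δ,Γ,Λ)`, `X(Δ',Γ',Λ')` lie in the same
orbit of `W(B_n)` acting on subspaces of `ℝⁿ` by taking images iff `|Δ| = |Δ'|`
and `Λ, Λ'` have the same multiset of block sizes; the orbit of `X(Δ,Γ,Λ)` has
cardinality `2^{j-p} (n choose j) j!/b_λ`, where `j = n - |Δ|` and `p` is the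
number of blocks of `Λ`. -/
theorem signed_partition_subspace_orbits_B (n : ℕ) (hn : 1 ≤ n)
    (Δ Δ' Γ Γ' : Finset (Fin n))
    (hΓ : ∀ i ∈ Γ, i ∉ Δ) (hΓ' : ∀ i ∈ Γ', i ∉ Δ')
    (Λ : Setoid {i : Fin n // i ∉ Δ}) (Λ' : Setoid {i : Fin n // i ∉ Δ'}) :
    ((∃ g ∈ weylB n,
        signedPartitionSubspace Δ' Γ' Λ' =
          (signedPartitionSubspace Δ Γ Λ).map (g : (Fin n → ℝ) →ₗ[ℝ] (Fin n → ℝ))) ↔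
      (Δ.card = Δ'.card ∧ blockSizes Λ = blockSizes Λ')) ∧
    Nat.card {Z : Submodule ℝ (Fin n → ℝ) |
        ∃ g ∈ weylB n,
          Z = (signedPartitionSubspace Δ Γ Λ).map (g : (Fin n → ℝ) →ₗ[ℝ] (Fin n → ℝ))} =
      2 ^ ((n - Δ.card) - Multiset.card (blockSizes Λ)) * n.choose (n - Δ.card) *
        ((n - Δ.card).factorial / bLambda (blockSizes Λ)) := by
  classical
  have hΔn : Δ.card ≤ n := by
    have := Finset.card_le_univ Δ
    rwa [Fintype.card_fin] at this
  constructor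
  · constructor
    · rintro ⟨g, hg, h⟩
      exact SPS.invariants_of_map hg h
    · rintro ⟨hcard, hbs⟩
      exact SPS.exists_weyl_map Δ Δ' Γ Γ' Λ Λ' hcard hbs
  · -- the counting statement
    set PT := {x : Σ D : Finset (Fin n), Setoid {i : Fin n // i ∉ D} × Finset (Fin n) //
      x.1.card = Δ.card ∧ blockSizes x.2.1 = blockSizes Λ ∧
        x.2.2 ⊆ SPS.freeSet x.1 x.2.1} with hPT
    have hbij : ∃ Φ : PT → {Z : Submodule ℝ (Fin n → ℝ) |
        ∃ g ∈ weylB n,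
          Z = (signedPartitionSubspace Δ Γ Λ).map
            (g : (Fin n → ℝ) →ₗ[ℝ] (Fin n → ℝ))}, Function.Bijective Φ := by
      refine ⟨fun x => ⟨signedPartitionSubspace x.1.1 x.1.2.2 x.1.2.1, ?_⟩, ?_, ?_⟩
      · obtain ⟨g, hg, hmap⟩ := SPS.exists_weyl_map Δ x.1.1 Γ x.1.2.2 Λ x.1.2.1
          x.2.1.symm x.2.2.1.symm
        exact ⟨g, hg, hmap⟩
      · rintro ⟨⟨D₁, Λ₁, Γ₁⟩, hx⟩ ⟨⟨D₂, Λ₂, Γ₂⟩, hy⟩ h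
        have h' : signedPartitionSubspace D₁ Γ₁ Λ₁ = signedPartitionSubspace D₂ Γ₂ Λ₂ :=
          congrArg Subtype.val h
        have hD : D₁ = D₂ := SPS.delta_eq_of_sps_eq h'
        subst hD
        have hΛeq : Λ₁ = Λ₂ := SPS.setoid_eq_of_sps_eq h'
        subst hΛeq
        have hΓeq : Γ₁ = Γ₂ := SPS.gamma_eq_of_sps_eq D₁ Λ₁ hx.2.2 hy.2.2 h'
        subst hΓeq
        rfl
      · rintro ⟨Z, hZ⟩
        obtain ⟨g, hg, hmap⟩ := hZ
        obtain ⟨σ, ε, hε, hgf⟩ := hg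
        rw [SPS.map_sps hε hgf Δ Γ Λ] at hmap
        have hZ2 : Z = signedPartitionSubspace (Δ.image σ)
            (SPS.normGamma (Δ.image σ) (SPS.permSetoid σ Δ Λ)
              (SPS.permGamma σ ε Δ Γ)) (SPS.permSetoid σ Δ Λ) :=
          hmap.trans (SPS.sps_normGamma (Δ.image σ) (SPS.permSetoid σ Δ Λ)
            (SPS.permGamma σ ε Δ Γ))
        refine ⟨⟨⟨Δ.image σ, SPS.permSetoid σ Δ Λ,
          SPS.normGamma (Δ.image σ) (SPS.permSetoid σ Δ Λ) (SPS.permGamma σ ε Δ Γ)⟩,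
          Finset.card_image_of_injective Δ σ.injective,
          SPS.blockSizes_permSetoid σ Δ Λ,
          SPS.normGamma_subset (Δ.image σ) (SPS.permSetoid σ Δ Λ)
            (SPS.permGamma σ ε Δ Γ)⟩, ?_⟩
        exact Subtype.ext hZ2.symm
    obtain ⟨Φ, hΦ⟩ := hbij
    rw [← Nat.card_eq_of_bijective Φ hΦ]
    -- now compute `Nat.card PT`
    have E1 : PT ≃ Σ (D : {D : Finset (Fin n) // D.card = Δ.card}),
        Σ (S : {S : Setoid {i : Fin n // i ∉ D.1} // blockSizes S = blockSizes Λ}),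
          {G : Finset (Fin n) // G ⊆ SPS.freeSet D.1 S.1} := by
      refine ⟨fun x => ⟨⟨x.1.1, x.2.1⟩, ⟨x.1.2.1, x.2.2.1⟩, ⟨x.1.2.2, x.2.2.2⟩⟩,
        fun y => ⟨⟨y.1.1, y.2.1.1, y.2.2.1⟩, y.1.2, y.2.1.2, y.2.2.2⟩, ?_, ?_⟩
      · rintro ⟨⟨D, S, G⟩, h⟩; rfl
      · rintro ⟨D, S, G⟩; rfl
    rw [Nat.card_congr E1, SPS.card_sigma_nat]
    have hInner : ∀ D : {D : Finset (Fin n) // D.card = Δ.card},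
        Nat.card (Σ (S : {S : Setoid {i : Fin n // i ∉ D.1} //
            blockSizes S = blockSizes Λ}),
          {G : Finset (Fin n) // G ⊆ SPS.freeSet D.1 S.1}) =
        ((n - Δ.card).factorial / bLambda (blockSizes Λ)) *
          2 ^ ((n - Δ.card) - Multiset.card (blockSizes Λ)) := by
      intro D
      rw [SPS.card_sigma_nat]
      have hG : ∀ S : {S : Setoid {i : Fin n // i ∉ D.1} //
          blockSizes S = blockSizes Λ},
          Nat.card {G : Finset (Fin n) // G ⊆ SPS.freeSet D.1 S.1} =
            2 ^ ((n - Δ.card) - Multiset.card (blockSizes Λ)) := by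
        intro S
        rw [SPS.nat_card_subsets, SPS.card_freeSet D.1 S.1, D.2, S.2]
      rw [Finset.sum_congr rfl (fun S _ => hG S), Finset.sum_const,
        Finset.card_univ, smul_eq_mul]
      congr 1
      rw [Fintype.card_eq_nat_card]
      exact (Nat.div_eq_of_eq_mul_left (SPS.bLambda_pos _)
        (SPS.nat_card_shape Δ D.1 D.2 Λ).symm).symm
    rw [Finset.sum_congr rfl (fun D _ => hInner D), Finset.sum_const,
      Finset.card_univ, smul_eq_mul]
    have hND : Fintype.card {D : Finset (Fin n) // D.card = Δ.card} =
        n.choose Δ.card := by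
      rw [Fintype.card_congr (Equiv.subtypeEquivRight (fun D =>
        show D.card = Δ.card ↔ D ∈ Finset.univ.powersetCard Δ.card from
          ⟨fun h => Finset.mem_powersetCard.2 ⟨Finset.subset_univ _, h⟩,
            fun h => (Finset.mem_powersetCard.1 h).2⟩)),
        Fintype.card_coe, Finset.card_powersetCard, Finset.card_univ,
        Fintype.card_fin]
    rw [hND, ← Nat.choose_symm hΔn]
    ring
end

section
/- Let n ≥ 1 and V = Fin n → ℝ, and let B be the Boolean system. Then the non-units of the Boolean reflection monoids of types B and D coincide: {α ∈ M(W(B_n), B) : dom α ≠ V} = {α ∈ M(W(D_n), B) : dom α ≠ V}. Equivalently, for every signed permutation map g ∈ W(B_n) and every proper subspace X_S ∈ B (S ≠ ∅), there is an even signed permutation map h ∈ W(D_n) with g|_{X_S} = h|_{X_S}. -/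
/-- The set `M(G,B)` of partial linear isomorphisms `g|_X` for `g ∈ G`, `X ∈ B`. -/
def MGB {F V : Type*} [Field F] [AddCommGroup V] [Module F V]
    (G : Set (V ≃ₗ[F] V)) (B : Set (Submodule F V)) : Set (V →ₗ.[F] V) :=
  {p | ∃ g ∈ G, ∃ X ∈ B, p = (g : V →ₗ[F] V).toPMap X}

/-- The coordinate subspace `X_S = {v : v i = 0 for i ∈ S}`. -/
def coordSubspace {n : ℕ} (S : Set (Fin n)) : Submodule ℝ (Fin n → ℝ) where
  carrier := {v | ∀ i ∈ S, v i = 0}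
  add_mem' := by
    intro a b ha hb i hi
    simp [ha i hi, hb i hi]
  zero_mem' := fun i _ => rfl
  smul_mem' := by
    intro c v hv i hi
    simp [hv i hi]

/-- The Boolean system: all coordinate subspaces `X_S`, `S ⊆ Fin n`. -/
def booleanSystem (n : ℕ) : Set (Submodule ℝ (Fin n → ℝ)) :=
  {X | ∃ S : Set (Fin n), X = coordSubspace S}

/-- The Weyl group of type `D_n`: the even signed permutation maps. -/
def weylD (n : ℕ) : Set ((Fin n → ℝ) ≃ₗ[ℝ] (Fin n → ℝ)) :=
  {g | ∃ (σ : Equiv.Perm (Fin n)) (ε : Fin n → ℝ), (∀ i, ε i = 1 ∨ ε i = -1) ∧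
    (∏ i, ε i) = 1 ∧
    ∀ (v : Fin n → ℝ) (i : Fin n), g v i = ε i * v (σ⁻¹ i)}

/-- The linear equivalence flipping the sign of coordinate `i₀`. -/
noncomputable def flipAt {n : ℕ} (i₀ : Fin n) : (Fin n → ℝ) ≃ₗ[ℝ] (Fin n → ℝ) :=
  LinearEquiv.ofInvolutive
    { toFun := fun v i => if i = i₀ then -v i else v i
      map_add' := by
        intro a b; funext i; by_cases h : i = i₀ <;> simp [h] <;> ring
      map_smul' := by
        intro c v; funext i; by_cases h : i = i₀ <;> simp [h] }
    (by intro v; funext i; by_cases h : i = i₀ <;> simp [h])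

lemma flipAt_apply {n : ℕ} (i₀ : Fin n) (v : Fin n → ℝ) (i : Fin n) :
    flipAt i₀ v i = if i = i₀ then -v i else v i := rfl

lemma key {n : ℕ} : ∀ g ∈ weylB n, ∀ S : Set (Fin n), S ≠ ∅ →
    ∃ h ∈ weylD n,
      ((g : (Fin n → ℝ) ≃ₗ[ℝ] (Fin n → ℝ)) : (Fin n → ℝ) →ₗ[ℝ] (Fin n → ℝ)).toPMap
          (coordSubspace S) =
        ((h : (Fin n → ℝ) ≃ₗ[ℝ] (Fin n → ℝ)) : (Fin n → ℝ) →ₗ[ℝ] (Fin n → ℝ)).toPMap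
          (coordSubspace S) := by
  rintro g ⟨σ, ε, hε, hg⟩ S hS
  obtain ⟨j, hj⟩ := Set.nonempty_iff_ne_empty.2 hS
  have hsq : (∏ i, ε i) * (∏ i, ε i) = 1 := by
    rw [← Finset.prod_mul_distrib]
    exact Finset.prod_eq_one fun i _ => by rcases hε i with h | h <;> rw [h] <;> norm_num
  rcases mul_self_eq_one_iff.1 hsq with hprod | hprod
  · exact ⟨g, ⟨σ, ε, hε, hprod, hg⟩, rfl⟩
  · refine ⟨g.trans (flipAt (σ j)), ?_, ?_⟩
    · refine ⟨σ, fun i => (if i = σ j then (-1:ℝ) else 1) * ε i, ?_, ?_, ?_⟩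
      · intro i
        by_cases hi : i = σ j
        · subst hi; rcases hε (σ j) with h | h <;> simp [h]
        · simpa [hi] using hε i
      · rw [Finset.prod_mul_distrib, hprod, Finset.prod_ite_eq' Finset.univ (σ j) (fun _ => (-1:ℝ))]
        simp
      · intro v i
        simp only [LinearEquiv.trans_apply, flipAt_apply, hg]
        by_cases hi : i = σ j <;> simp [hi] <;> ring
    · refine LinearPMap.ext rfl ?_
      intro x hx hy
      change x ∈ coordSubspace S at hx
      change (g : (Fin n → ℝ) →ₗ[ℝ] (Fin n → ℝ)) x = ((g.trans (flipAt (σ j)) : (Fin n → ℝ) ≃ₗ[ℝ] (Fin n → ℝ)) : (Fin n → ℝ) →ₗ[ℝ] (Fin n → ℝ)) x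
      simp only [LinearMap.toPMap_apply, LinearEquiv.coe_coe, LinearEquiv.trans_apply]
      funext i
      rw [flipAt_apply]
      by_cases hi : i = σ j
      · subst hi
        rw [hg x (σ j)]
        simp [hx j hj]
      · simp [hi]

lemma coordSubspace_empty {n : ℕ} : coordSubspace (∅ : Set (Fin n)) = ⊤ := by
  ext v
  simp [coordSubspace]

/-- The non-units of the Boolean reflection monoids of types
`B_n` and `D_n` coincide; equivalently, the restriction of any signed permutation
map to a proper coordinate subspace `X_S` (`S ≠ ∅`) agrees with the restriction of
some even signed permutation map. -/
theorem nonunits_boolean_monoid_B_eq_D (n : ℕ) (hn : 1 ≤ n) :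
    ({α | α ∈ MGB (weylB n) (booleanSystem n) ∧ α.domain ≠ ⊤} =
      {α | α ∈ MGB (weylD n) (booleanSystem n) ∧ α.domain ≠ ⊤}) ∧
    (∀ g ∈ weylB n, ∀ S : Set (Fin n), S ≠ ∅ →
      ∃ h ∈ weylD n,
        ((g : (Fin n → ℝ) ≃ₗ[ℝ] (Fin n → ℝ)) : (Fin n → ℝ) →ₗ[ℝ] (Fin n → ℝ)).toPMap
            (coordSubspace S) =
          ((h : (Fin n → ℝ) ≃ₗ[ℝ] (Fin n → ℝ)) : (Fin n → ℝ) →ₗ[ℝ] (Fin n → ℝ)).toPMap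
            (coordSubspace S)) := by
  refine ⟨?_, key⟩
  ext α
  simp only [Set.mem_setOf_eq]
  constructor
  · rintro ⟨⟨g, hg, X, ⟨S, rfl⟩, rfl⟩, hdom⟩
    have hSne : S ≠ ∅ := by
      rintro rfl
      exact hdom (by rw [LinearMap.toPMap_domain, coordSubspace_empty])
    obtain ⟨h, hh, heq⟩ := key g hg S hSne
    exact ⟨⟨h, hh, coordSubspace S, ⟨S, rfl⟩, heq ▸ rfl⟩, hdom⟩
  · rintro ⟨⟨g, ⟨σ, ε, hε, _, hg⟩, X, hX, rfl⟩, hdom⟩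
    exact ⟨⟨g, ⟨σ, ε, hε, hg⟩, X, hX, rfl⟩, hdom⟩
end

section
/- Let F be a field of characteristic zero (e.g. F = ℝ or ℂ) and V an F-vector space. A reflection is an element s ∈ GL(V) of finite order greater than 1 whose fixed-point subspace {v ∈ V : s v = v} is a hyperplane (a codimension-1 subspace) of V. Let W be a nontrivial subgroup of GL(V) generated by reflections and let B be a system of subspaces for W. Then every element of M(W,B) is a composition of finitely many partial reflections, i.e. for every α ∈ M(W,B) there exist reflections s_1,…,s_k ∈ W and subspaces X_1,…,X_k ∈ B such that α = (s_1|_{X_1})(s_2|_{X_2})⋯(s_k|_{X_k}); in particular M(W,B) is a reflection monoid. -/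
/-- Composition of partial linear maps: domain `{v ∈ dom α : α v ∈ dom β}`,
value `(αβ) v = β (α v)`. -/
noncomputable def pcomp {F V : Type*} [Field F] [AddCommGroup V] [Module F V]
    (α β : V →ₗ.[F] V) : V →ₗ.[F] V :=
  { domain := (β.domain.comap α.toFun).map α.domain.subtype
    toFun := β.toFun.comp
      ((LinearMap.codRestrict β.domain (α.toFun.comp (β.domain.comap α.toFun).subtype)
          (fun c => c.2)).comp
        (Submodule.equivMapOfInjective α.domain.subtype (Submodule.injective_subtype _)
            (β.domain.comap α.toFun)).symm.toLinearMap) }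

/-- A reflection: a nontrivial element of `GL(V)` of finite order whose
fixed-point subspace is a hyperplane (a coatom in the lattice of subspaces). -/
def IsReflection {F V : Type*} [Field F] [AddCommGroup V] [Module F V]
    (s : V ≃ₗ[F] V) : Prop :=
  IsOfFinOrder s ∧ s ≠ 1 ∧
    IsCoatom (LinearMap.ker ((s : V →ₗ[F] V) - LinearMap.id))

section Aux

variable {F V : Type*} [Field F] [AddCommGroup V] [Module F V]

lemma pcomp_toPMap_top (f h : V →ₗ[F] V) (X : Submodule F V) :
    pcomp (f.toPMap X) (h.toPMap ⊤) = (h.comp f).toPMap X := by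
  apply LinearPMap.ext
  · show ((⊤ : Submodule F V).comap _).map X.subtype = X
    exact (congrArg (Submodule.map X.subtype) (Submodule.comap_top _)).trans (Submodule.map_subtype_top X)
  · intro x hx y
    show (h.comp ((⊤:Submodule F V).subtype)) _ = (h.comp f) ((⟨x, y⟩ : X) : V)
    set e := Submodule.equivMapOfInjective X.subtype (Submodule.injective_subtype _)
        ((⊤ : Submodule F V).comap ((f.toPMap X).toFun))
    have hz : X.subtype ((e.symm ⟨x, hx⟩ : _) : X) = x :=
      Submodule.map_equivMapOfInjective_symm_apply X.subtype
        (Submodule.injective_subtype _) ((⊤ : Submodule F V).comap ((f.toPMap X).toFun)) ⟨x, hx⟩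
    simp only [LinearMap.comp_apply]
    show h (f (((e.symm ⟨x, hx⟩ : _) : X) : V)) = h (f x)
    rw [show (((e.symm ⟨x, hx⟩ : _) : X) : V) = x from hz]

lemma IsReflection.inv {s : V ≃ₗ[F] V} (h : IsReflection s) : IsReflection s⁻¹ := by
  obtain ⟨h1, h2, h3⟩ := h
  refine ⟨h1.inv, by simpa using h2, ?_⟩
  have : LinearMap.ker (((s⁻¹ : V ≃ₗ[F] V) : V →ₗ[F] V) - LinearMap.id)
      = LinearMap.ker (((s : V ≃ₗ[F] V) : V →ₗ[F] V) - LinearMap.id) := by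
    ext v
    simp only [LinearMap.mem_ker, LinearMap.sub_apply, LinearMap.id_apply, sub_eq_zero,
      LinearEquiv.coe_coe]
    show s.symm v = v ↔ s v = v
    rw [LinearEquiv.symm_apply_eq]
    exact eq_comm
  rw [this]; exact h3

lemma chain_pcomp (l : List (V ≃ₗ[F] V)) (s : V ≃ₗ[F] V) (X : Submodule F V) :
    (l.map (fun t => (t, (⊤ : Submodule F V)))).foldl
        (fun acc r => pcomp acc ((r.1 : V →ₗ[F] V).toPMap r.2)) ((s : V →ₗ[F] V).toPMap X)
      = ((l.foldl (fun a b => b * a) s : V ≃ₗ[F] V) : V →ₗ[F] V).toPMap X := by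
  induction l generalizing s with
  | nil => rfl
  | cons a l ih =>
    simp only [List.map_cons, List.foldl_cons]
    rw [pcomp_toPMap_top,
      show ((a : V →ₗ[F] V).comp (s : V →ₗ[F] V)) = ((a * s : V ≃ₗ[F] V) : V →ₗ[F] V)
        from rfl, ih]

lemma foldl_flip_mul {M : Type*} [Monoid M] (l : List M) (s : M) :
    l.foldl (fun a b => b * a) s = l.reverse.prod * s := by
  induction l generalizing s with
  | nil => simp
  | cons a l ih => simp [ih, mul_assoc]

lemma group_decomp (W : Subgroup (V ≃ₗ[F] V)) (hWnt : W ≠ ⊥)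
    (hWgen : W = Subgroup.closure {s : V ≃ₗ[F] V | IsReflection s ∧ s ∈ W}) :
    ∀ g ∈ W, ∃ (s : V ≃ₗ[F] V) (l : List (V ≃ₗ[F] V)),
      (∀ r ∈ s :: l, IsReflection r ∧ r ∈ W) ∧ g = l.reverse.prod * s := by
  set S := {s : V ≃ₗ[F] V | IsReflection s ∧ s ∈ W} with hS
  have hSne : S.Nonempty := by
    by_contra hc
    rw [Set.not_nonempty_iff_eq_empty] at hc
    rw [hc, Subgroup.closure_empty] at hWgen
    exact hWnt hWgen
  obtain ⟨s₀, hs₀⟩ := hSne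
  intro g hg
  rw [hWgen] at hg
  induction hg using Subgroup.closure_induction with
  | mem x hx =>
    refine ⟨x, [], ?_, by simp⟩
    intro r hr
    rw [List.mem_singleton] at hr
    subst hr; exact hx
  | one =>
    refine ⟨s₀⁻¹, [s₀], ?_, by simp⟩
    rintro r hr
    rcases List.mem_cons.mp hr with rfl | hr'
    swap
    · rw [List.mem_singleton] at hr'; subst hr'; exact hs₀
    all_goals skip
    exact ⟨hs₀.1.inv, W.inv_mem hs₀.2⟩
  | mul x y hx hy ihx ihy =>
    obtain ⟨s, l, hl, rfl⟩ := ihx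
    obtain ⟨t, m, hm, rfl⟩ := ihy
    refine ⟨t, m ++ (s :: l), ?_, ?_⟩
    · intro r hr
      rcases List.mem_cons.mp hr with rfl | hr'
      · exact hm _ List.mem_cons_self
      · rcases List.mem_append.mp hr' with h | h
        · exact hm _ (List.mem_cons_of_mem _ h)
        · exact hl _ h
    · simp [List.prod_append, mul_assoc]
  | inv x hx ihx =>
    obtain ⟨s, l, hl, rfl⟩ := ihx
    refine ⟨s, s⁻¹ :: (l.map (fun x => x⁻¹)).reverse ++ [s⁻¹], ?_, ?_⟩
    · intro r hr
      have hs' : IsReflection s⁻¹ ∧ s⁻¹ ∈ W := by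
        have := hl s List.mem_cons_self
        exact ⟨this.1.inv, W.inv_mem this.2⟩
      rcases List.mem_cons.mp hr with rfl | hr'
      · exact hl _ List.mem_cons_self
      · rcases List.mem_cons.mp hr' with rfl | hr''
        · exact hs'
        · rcases List.mem_append.mp hr'' with h | h
          · rw [List.mem_reverse, List.mem_map] at h
            obtain ⟨a, ha, rfl⟩ := h
            have := hl a (List.mem_cons_of_mem _ ha)
            exact ⟨this.1.inv, W.inv_mem this.2⟩
          · rw [List.mem_singleton] at h
            subst h; exact hs'
    · rw [mul_inv_rev, List.prod_inv_reverse]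
      simp [List.prod_append, List.map_reverse, mul_assoc]

end Aux

/-- If `W ≤ GL(V)` is a nontrivial group generated by
reflections (over a field of characteristic zero) and `B` is a system of
subspaces for `W`, then every element of `M(W,B)` is a composition of finitely
many partial reflections `s|_X` (`s` a reflection of `W`, `X ∈ B`); in
particular `M(W,B)` is a reflection monoid. -/
theorem reflection_monoid_generated_by_partial_reflections
    {F V : Type*} [Field F] [CharZero F] [AddCommGroup V] [Module F V]
    (W : Subgroup (V ≃ₗ[F] V)) (hWnt : W ≠ ⊥)
    (hWgen : W = Subgroup.closure {s : V ≃ₗ[F] V | IsReflection s ∧ s ∈ W})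
    (B : Set (Submodule F V))
    (hV : (⊤ : Submodule F V) ∈ B)
    (hmapB : ∀ X ∈ B, ∀ g ∈ W, X.map (g : V →ₗ[F] V) ∈ B)
    (hinf : ∀ X ∈ B, ∀ Y ∈ B, X ⊓ Y ∈ B) :
    ∀ α ∈ MGB (W : Set (V ≃ₗ[F] V)) B,
      ∃ (q : (V ≃ₗ[F] V) × Submodule F V) (L : List ((V ≃ₗ[F] V) × Submodule F V)),
        (∀ r ∈ q :: L, IsReflection r.1 ∧ r.1 ∈ W ∧ r.2 ∈ B) ∧
        α = L.foldl (fun acc r => pcomp acc ((r.1 : V →ₗ[F] V).toPMap r.2))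
              ((q.1 : V →ₗ[F] V).toPMap q.2) := by
  rintro α ⟨g, hg, X, hX, rfl⟩
  obtain ⟨s, l, hl, hprod⟩ := group_decomp W hWnt hWgen g hg
  refine ⟨(s, X), l.map (fun t => (t, (⊤ : Submodule F V))), ?_, ?_⟩
  · intro r hr
    simp only [List.mem_cons, List.mem_map] at hr
    rcases hr with rfl | ⟨a, ha, rfl⟩
    · have := hl s (by simp); exact ⟨this.1, this.2, hX⟩
    · have := hl a (by simp [ha]); exact ⟨this.1, this.2, hV⟩
  · rw [chain_pcomp, foldl_flip_mul, ← hprod]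
end
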